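/- arXiv:2510.03752 — 4 statements merged into one kernel-verified Lean document; each statement's English description precedes it below -/
import Mathlib

section
/- For matrices A and B over a field, the rank of their Kronecker product equals the product of their ranks: rank(A ⊗ B) = rank(A)·rank(B). -/
/-!
Over a field, the range of `f ⊗ g` is the image of `range f ⊗ range g` under the inclusion, and
that inclusion is injective because vector spaces are flat; so its dimension is the product of
the dimensions of the two ranges. Kronecker products of matrices are the matrices of such maps.
-/

open Matrix Kronecker

namespace TensorProduct

theorem range_map_eq_range_mapIncl {R M N P Q : Type*} [CommSemiring R]
    [AddCommMonoid M] [Module R M] [AddCommMonoid N] [Module R N]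
    [AddCommMonoid P] [Module R P] [AddCommMonoid Q] [Module R Q]
    (f : M →ₗ[R] P) (g : N →ₗ[R] Q) :
    LinearMap.range (map f g) =
      LinearMap.range (mapIncl (LinearMap.range f) (LinearMap.range g)) := by
  rw [range_map, range_mapIncl]

theorem finrank_range_map {K V W V' W' : Type*} [Field K]
    [AddCommGroup V] [Module K V] [AddCommGroup W] [Module K W]
    [AddCommGroup V'] [Module K V'] [AddCommGroup W'] [Module K W']
    (f : V →ₗ[K] V') (g : W →ₗ[K] W') :
    Module.finrank K (LinearMap.range (map f g)) =
      Module.finrank K (LinearMap.range f) * Module.finrank K (LinearMap.range g) := by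
  rw [range_map_eq_range_mapIncl, LinearMap.finrank_range_of_inj
    (Module.Flat.tensorProduct_mapIncl_injective_of_right _ _), Module.finrank_tensorProduct]

end TensorProduct

theorem Matrix.rank_kronecker {K m₁ n₁ m₂ n₂ : Type*} [Field K]
    [Fintype m₁] [Fintype n₁] [Fintype m₂] [Fintype n₂]
    (A : Matrix m₁ n₁ K) (B : Matrix m₂ n₂ K) :
    (A ⊗ₖ B).rank = A.rank * B.rank := by
  classical
  let bm₁ := Pi.basisFun K m₁
  let bn₁ := Pi.basisFun K n₁
  let bm₂ := Pi.basisFun K m₂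
  let bn₂ := Pi.basisFun K n₂
  rw [rank_eq_finrank_range_toLin (A ⊗ₖ B) (bm₁.tensorProduct bm₂) (bn₁.tensorProduct bn₂),
    toLin_kronecker, TensorProduct.finrank_range_map,
    rank_eq_finrank_range_toLin A bm₁ bn₁, rank_eq_finrank_range_toLin B bm₂ bn₂]

/-- rank(A ⊗ B) = rank(A)·rank(B) over a field. -/
theorem rank_kronecker {F : Type*} [Field F] (n₁ m₁ n₂ m₂ : ℕ)
    (A : Matrix (Fin n₁) (Fin m₁) F) (B : Matrix (Fin n₂) (Fin m₂) F) :
    (A ⊗ₖ B).rank = A.rank * B.rank :=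
  Matrix.rank_kronecker A B
end

section
/- Let t divide n, set r = n/t. For i ∈ [t], let E_{ii} ∈ F_2^{t×t} be the matrix unit with 1 in position (i,i), let P_i = E_{ii} ⊗ I_{n/t}, let p_i = vec(P_i) ∈ F_2^{n²}, and let P be the t×n² matrix whose i-th row is p_iᵀ. Then for all A, B ∈ F_2^{n×n}, the t-block-wise inner product satisfies ⟨A,B⟩_t = P·(A ⊗ B)·Pᵀ. -/
open Matrix Kronecker

/-- The t-block-wise inner product (n = t·m, indices encoded as pairs). -/
def blockIP {t m : ℕ} (A B : Matrix (Fin t × Fin m) (Fin t × Fin m) (ZMod 2)) :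
    Matrix (Fin t) (Fin t) (ZMod 2) :=
  Matrix.of fun i j => ∑ a, ∑ b, A (i, a) (j, b) * B (i, a) (j, b)

/-- Column-wise vectorization: `vec M (j, i) = M i j`. -/
def vec {l m : Type*} {R : Type*} (M : Matrix l m R) : m × l → R := fun p => M p.2 p.1

/-- P_i = E_{ii} ⊗ I_{n/t}. -/
def Pmat (t m : ℕ) (i : Fin t) : Matrix (Fin t × Fin m) (Fin t × Fin m) (ZMod 2) :=
  Matrix.single i i (1 : ZMod 2) ⊗ₖ (1 : Matrix (Fin m) (Fin m) (ZMod 2))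

/-- The t×n² matrix P whose i-th row is vec(P_i)ᵀ. -/
def Pbig (t m : ℕ) : Matrix (Fin t) ((Fin t × Fin m) × (Fin t × Fin m)) (ZMod 2) :=
  Matrix.of fun i p => _root_.vec (Pmat t m i) p

/-! The rows of `P` are `vec (diagonal xᵢ)` with `xᵢ` the indicator of the `i`-th block of
coordinates, and on vectorized diagonal matrices the bilinear form of `A ⊗ B` is the bilinear
form of the Hadamard product `A ⊙ B`. Against two block indicators the latter sums the entries
of `A ⊙ B` over the block `(i, j)`, which is `⟨A, B⟩_t`. -/

theorem Matrix.mul_mul_apply_eq_dotProduct_mulVec {l m n o R : Type*} [Fintype m] [Fintype n]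
    [NonUnitalSemiring R] (A : Matrix l m R) (B : Matrix m n R) (C : Matrix n o R)
    (i : l) (j : o) :
    (A * B * C) i j = A i ⬝ᵥ B *ᵥ Cᵀ j := by
  rw [Matrix.mul_assoc]
  simp [mul_apply, dotProduct, mulVec]

section BlockIndicator

variable {ι κ R : Type*} [Fintype ι] [Fintype κ] [DecidableEq ι] [NonAssocSemiring R]

theorem single_comp_fst_dotProduct (i : ι) (v : ι × κ → R) :
    (Pi.single i 1 ∘ Prod.fst) ⬝ᵥ v = ∑ k, v (i, k) := by
  simp_rw [dotProduct, Fintype.sum_prod_type, Function.comp_apply, ← Finset.mul_sum,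
    Pi.single_apply, ite_mul, one_mul, zero_mul, Finset.sum_ite_eq', Finset.mem_univ, if_true]

theorem dotProduct_single_comp_fst (v : ι × κ → R) (i : ι) :
    v ⬝ᵥ (Pi.single i 1 ∘ Prod.fst) = ∑ k, v (i, k) := by
  simp_rw [dotProduct, Fintype.sum_prod_type, Function.comp_apply, ← Finset.sum_mul,
    Pi.single_apply, mul_ite, mul_one, mul_zero, Finset.sum_ite_eq', Finset.mem_univ, if_true]

end BlockIndicator

theorem Pmat_eq_diagonal (t m : ℕ) (i : Fin t) :
    Pmat t m i = diagonal (Pi.single i 1 ∘ Prod.fst) := by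
  rw [Pmat, ← diagonal_single, ← diagonal_one, diagonal_kronecker_diagonal]
  simp_rw [mul_one]
  rfl

theorem Pbig_apply (t m : ℕ) (i : Fin t) :
    Pbig t m i = (diagonal (Pi.single i 1 ∘ Prod.fst)).vec := by
  rw [← Pmat_eq_diagonal]
  rfl

theorem blockIP_apply {t m : ℕ} (A B : Matrix (Fin t × Fin m) (Fin t × Fin m) (ZMod 2))
    (i j : Fin t) :
    blockIP A B i j = (Pi.single i 1 ∘ Prod.fst) ⬝ᵥ (A ⊙ B) *ᵥ (Pi.single j 1 ∘ Prod.fst) := by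
  simp only [single_comp_fst_dotProduct, mulVec, dotProduct_single_comp_fst, blockIP, of_apply,
    hadamard_apply]

/-- ⟨A,B⟩_t = P·(A ⊗ B)·Pᵀ. -/
theorem blockIP_eq_P_kronecker_Pt {t m : ℕ}
    (A B : Matrix (Fin t × Fin m) (Fin t × Fin m) (ZMod 2)) :
    blockIP A B = Pbig t m * (A ⊗ₖ B) * (Pbig t m)ᵀ := by
  ext i j
  rw [Matrix.mul_mul_apply_eq_dotProduct_mulVec, transpose_transpose, Pbig_apply, Pbig_apply,
    ← dotProduct_hadamard_mulVec_eq_kronecker, blockIP_apply]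
end

section
/- Let t divide n and let A, B ∈ F_2^{n×n}. Then the rank of the t-block-wise inner product is bounded by rank(⟨A,B⟩_t) ≤ min(rank(A)·rank(B), t). -/
/-!
Factor `A = C * D` and `B = E * F` through `Fin (rank A)` and `Fin (rank B)`. Then
`(A ⊙ B) i j = ∑ k l, (C i k * E i l) * (D k j * F l j)`, so the Hadamard product factors through
`Fin (rank A) × Fin (rank B)`. Summing the entries of each `m × m` block is multiplication by
0/1 matrices on both sides, which cannot increase the rank, and `⟨A, B⟩_t` is exactly the block
sum of `A ⊙ B`. The bound by `t` is the number of columns.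
-/

open Matrix

namespace Matrix

variable {m n r s ι κ α β R K : Type*}

theorem exists_eq_mul_of_rank [Fintype m] [Fintype n] [Field K] (A : Matrix m n K) :
    ∃ (C : Matrix m (Fin A.rank) K) (D : Matrix (Fin A.rank) n K), A = C * D := by
  set V := Submodule.span K (Set.range A.col)
  let b : Module.Basis (Fin A.rank) K V :=
    (Module.finBasis K V).reindex (finCongr (rank_eq_finrank_span_cols A).symm)
  have hcol (j : n) : A.col j ∈ V := Submodule.subset_span ⟨j, rfl⟩
  refine ⟨of fun i k => (b k : m → K) i, of fun k j => b.repr ⟨A.col j, hcol j⟩ k, ?_⟩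
  ext i j
  have hsum := congr_arg (fun v : V => (v : m → K) i) (b.sum_repr ⟨A.col j, hcol j⟩)
  simp only [Submodule.coe_sum, Submodule.coe_smul, Finset.sum_apply, Pi.smul_apply,
    smul_eq_mul] at hsum
  simpa [mul_apply, mul_comm] using hsum.symm

theorem mul_hadamard_mul [Fintype r] [Fintype s] [CommSemiring R] (C : Matrix m r R)
    (D : Matrix r n R) (E : Matrix m s R) (F : Matrix s n R) :
    (C * D) ⊙ (E * F) =
      (of fun i (kl : r × s) => C i kl.1 * E i kl.2 : Matrix m (r × s) R) *
        (of fun (kl : r × s) j => D kl.1 j * F kl.2 j : Matrix (r × s) n R) := by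
  ext i j
  simp only [hadamard_apply, mul_apply, of_apply, Fintype.sum_prod_type, Finset.sum_mul_sum,
    mul_mul_mul_comm]

theorem rank_hadamard_le [Fintype m] [Fintype n] [Field K] (A B : Matrix m n K) :
    (A ⊙ B).rank ≤ A.rank * B.rank := by
  obtain ⟨C, D, hA⟩ := exists_eq_mul_of_rank A
  obtain ⟨E, F, hB⟩ := exists_eq_mul_of_rank B
  calc (A ⊙ B).rank = ((C * D) ⊙ (E * F)).rank := by rw [← hA, ← hB]
    _ ≤ Fintype.card (Fin A.rank × Fin B.rank) := by
      rw [mul_hadamard_mul]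
      exact (rank_mul_le_left _ _).trans (rank_le_card_width _)
    _ = A.rank * B.rank := by simp

def blockSum [Fintype α] [Fintype β] [AddCommMonoid R] (M : Matrix (ι × α) (κ × β) R) :
    Matrix ι κ R :=
  of fun i j => ∑ a, ∑ b, M (i, a) (j, b)

theorem blockSum_eq_mul [Fintype ι] [Fintype κ] [Fintype α] [Fintype β] [DecidableEq ι]
    [DecidableEq κ] [Semiring R] (M : Matrix (ι × α) (κ × β) R) :
    blockSum M = (1 : Matrix ι ι R).submatrix id (Prod.fst : ι × α → ι) * M *
      (1 : Matrix κ κ R).submatrix (Prod.fst : κ × β → κ) id := by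
  ext i j
  simp only [blockSum, of_apply, mul_apply, submatrix_apply, one_apply, id_eq, ite_mul, one_mul,
    zero_mul, Fintype.sum_prod_type_right, Finset.sum_ite_eq, Finset.mem_univ, ↓reduceIte,
    mul_ite, mul_one, mul_zero, Finset.sum_ite_eq']
  exact Finset.sum_comm

theorem rank_blockSum_le [Fintype ι] [Fintype κ] [Fintype α] [Fintype β] [CommRing R]
    [StrongRankCondition R] (M : Matrix (ι × α) (κ × β) R) : (blockSum M).rank ≤ M.rank := by
  classical
  rw [blockSum_eq_mul]
  exact (rank_mul_le_left _ _).trans (rank_mul_le_right _ _)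

end Matrix

theorem blockIP_eq_blockSum_hadamard {t m : ℕ}
    (A B : Matrix (Fin t × Fin m) (Fin t × Fin m) (ZMod 2)) :
    blockIP A B = blockSum (A ⊙ B) :=
  rfl

/-- rank(⟨A,B⟩_t) ≤ min(rank(A)·rank(B), t). -/
theorem rank_blockIP_le {t m : ℕ}
    (A B : Matrix (Fin t × Fin m) (Fin t × Fin m) (ZMod 2)) :
    (blockIP A B).rank ≤ min (A.rank * B.rank) t := by
  refine le_min ?_ (rank_le_width _)
  calc (blockIP A B).rank = (blockSum (A ⊙ B)).rank := by rw [blockIP_eq_blockSum_hadamard]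
    _ ≤ (A ⊙ B).rank := rank_blockSum_le _
    _ ≤ A.rank * B.rank := rank_hadamard_le A B
end

section
/- Let a₁, ..., a_k ∈ F_2^m be linearly independent and let h₁, ..., h_l ∈ F_2^m be linearly independent vectors lying in the orthogonal complement {h : ⟨a_p, h⟩ = 0 for all p ∈ [k]} (with respect to the standard bilinear form on F_2^m). Then the joint distribution of (a, h) obtained by first sampling a uniformly among linearly independent k-tuples and then h uniformly among linearly independent l-tuples in a^⊥ is identical to the distribution obtained by first sampling h uniformly among linearly independent l-tuples in F_2^m and then a uniformly among linearly independent k-tuples in h^⊥. -/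
/-!
Both densities vanish unless `a` and `h` are linearly independent and orthogonal to each other;
in that case each is the reciprocal of a product of two counts. Both products count the
orthogonal pairs of independent tuples: for independent `a`, the space `a^⊥` has dimension
`m - k`, so the number of independent `l`-tuples in `a^⊥` does not depend on `a`, and counting
the pairs by their first component gives `#{a} * #{h ∈ a^⊥}`, by their second `#{h} * #{a ∈ h^⊥}`.
-/

open Matrix
open scoped Classical

/-- `orth a h` means every vector of the tuple `h` is orthogonal (w.r.t. the standard
bilinear form on F₂^m) to every vector of the tuple `a`. -/
def orth {m k l : ℕ} (a : Fin k → (Fin m → ZMod 2)) (h : Fin l → (Fin m → ZMod 2)) : Prop :=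
  ∀ p i, (a p) ⬝ᵥ (h i) = 0

/-- Density at (a, h) of the process: sample `a` uniformly among linearly independent
k-tuples in F₂^m, then `h` uniformly among linearly independent l-tuples in a^⊥. -/
noncomputable def densityAH (m k l : ℕ)
    (a : Fin k → (Fin m → ZMod 2)) (h : Fin l → (Fin m → ZMod 2)) : ℝ :=
  (if LinearIndependent (ZMod 2) a then 1 else 0)
    / (Nat.card {a' : Fin k → (Fin m → ZMod 2) // LinearIndependent (ZMod 2) a'} : ℝ)
  * ((if LinearIndependent (ZMod 2) h ∧ orth a h then 1 else 0)
    / (Nat.card {h' : Fin l → (Fin m → ZMod 2) //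
        LinearIndependent (ZMod 2) h' ∧ orth a h'} : ℝ))

/-- Density at (a, h) of the process: sample `h` uniformly among linearly independent
l-tuples in F₂^m, then `a` uniformly among linearly independent k-tuples in h^⊥. -/
noncomputable def densityHA (m k l : ℕ)
    (a : Fin k → (Fin m → ZMod 2)) (h : Fin l → (Fin m → ZMod 2)) : ℝ :=
  (if LinearIndependent (ZMod 2) h then 1 else 0)
    / (Nat.card {h' : Fin l → (Fin m → ZMod 2) // LinearIndependent (ZMod 2) h'} : ℝ)
  * ((if LinearIndependent (ZMod 2) a ∧ orth a h then 1 else 0)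
    / (Nat.card {a' : Fin k → (Fin m → ZMod 2) //
        LinearIndependent (ZMod 2) a' ∧ orth a' h} : ℝ))

open Module LinearMap

section CardLinearIndependent

variable {K V W : Type*} [Ring K] [AddCommGroup V] [Module K V] [AddCommGroup W] [Module K W]

theorem LinearEquiv.card_linearIndependent_eq (e : V ≃ₗ[K] W) (l : ℕ) :
    Nat.card {s : Fin l → V // LinearIndependent K s} =
      Nat.card {s : Fin l → W // LinearIndependent K s} :=
  Nat.card_congr <| (Equiv.piCongrRight fun _ => e.toEquiv).subtypeEquiv fun _ =>
    (e.toLinearMap.linearIndependent_iff_of_injOn e.injective.injOn).symm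

theorem Submodule.card_linearIndependent_forall_mem (U : Submodule K V) (l : ℕ) :
    Nat.card {s : Fin l → V // LinearIndependent K s ∧ ∀ i, s i ∈ U} =
      Nat.card {s : Fin l → U // LinearIndependent K s} :=
  Nat.card_congr
    { toFun := fun s => ⟨fun i => ⟨s.1 i, s.2.2 i⟩, s.2.1.of_comp U.subtype⟩
      invFun := fun s => ⟨fun i => s.1 i, s.2.map' U.subtype U.ker_subtype, fun i => (s.1 i).2⟩
      left_inv := fun _ => rfl
      right_inv := fun _ => rfl }

end CardLinearIndependent

theorem Submodule.card_linearIndependent_forall_mem_of_finrank_eq {K V : Type*} [DivisionRing K]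
    [AddCommGroup V] [Module K V] {U U' : Submodule K V}
    [FiniteDimensional K U] [FiniteDimensional K U']
    (hUU' : finrank K U = finrank K U') (l : ℕ) :
    Nat.card {s : Fin l → V // LinearIndependent K s ∧ ∀ i, s i ∈ U} =
      Nat.card {s : Fin l → V // LinearIndependent K s ∧ ∀ i, s i ∈ U'} := by
  rw [U.card_linearIndependent_forall_mem, U'.card_linearIndependent_forall_mem,
    (LinearEquiv.ofFinrankEq U U' hUU').card_linearIndependent_eq]

theorem Matrix.finrank_ker_mulVecLin_of_linearIndependent_row {K m n : Type*} [Field K]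
    [Fintype m] [Fintype n] {M : Matrix m n K} (hM : LinearIndependent K M.row) :
    finrank K (ker M.mulVecLin) = Fintype.card n - Fintype.card m := by
  have := M.mulVecLin.finrank_range_add_finrank_ker
  rw [finrank_fintype_fun_eq_card, ← Matrix.rank, hM.rank_matrix] at this
  omega

variable {m k l : ℕ}

theorem orth_comm {a : Fin k → Fin m → ZMod 2} {h : Fin l → Fin m → ZMod 2} :
    orth a h ↔ orth h a :=
  ⟨fun H p i => dotProduct_comm (a i) (h p) ▸ H i p,
   fun H p i => dotProduct_comm (h i) (a p) ▸ H i p⟩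

theorem orth_iff_forall_mem_ker {a : Fin k → Fin m → ZMod 2} {h : Fin l → Fin m → ZMod 2} :
    orth a h ↔ ∀ i, h i ∈ ker (Matrix.of a).mulVecLin := by
  simp [orth, mulVec, funext_iff, forall_comm (α := Fin k)]

theorem card_linearIndependent_orth_congr {a a' : Fin k → Fin m → ZMod 2}
    (ha : LinearIndependent (ZMod 2) a) (ha' : LinearIndependent (ZMod 2) a') (l : ℕ) :
    Nat.card {h : Fin l → Fin m → ZMod 2 // LinearIndependent (ZMod 2) h ∧ orth a h} =
      Nat.card {h : Fin l → Fin m → ZMod 2 // LinearIndependent (ZMod 2) h ∧ orth a' h} := by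
  simp_rw [orth_iff_forall_mem_ker]
  refine Submodule.card_linearIndependent_forall_mem_of_finrank_eq ?_ l
  rw [finrank_ker_mulVecLin_of_linearIndependent_row (M := of a) ha,
    finrank_ker_mulVecLin_of_linearIndependent_row (M := of a') ha']

def orthPairs (m k l : ℕ) : Set ((Fin k → Fin m → ZMod 2) × (Fin l → Fin m → ZMod 2)) :=
  {p | LinearIndependent (ZMod 2) p.1 ∧ LinearIndependent (ZMod 2) p.2 ∧ orth p.1 p.2}

theorem card_orthPairs_of_left {a : Fin k → Fin m → ZMod 2}
    (ha : LinearIndependent (ZMod 2) a) :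
    Nat.card (orthPairs m k l) =
      Nat.card {a' : Fin k → Fin m → ZMod 2 // LinearIndependent (ZMod 2) a'} *
        Nat.card {h : Fin l → Fin m → ZMod 2 // LinearIndependent (ZMod 2) h ∧ orth a h} := by
  let byFirst : orthPairs m k l ≃ Σ a' : {a' : Fin k → Fin m → ZMod 2 //
      LinearIndependent (ZMod 2) a'},
      {h : Fin l → Fin m → ZMod 2 // LinearIndependent (ZMod 2) h ∧ orth a'.1 h} :=
    { toFun := fun p => ⟨⟨p.1.1, p.2.1⟩, ⟨p.1.2, p.2.2⟩⟩
      invFun := fun q => ⟨(q.1.1, q.2.1), q.1.2, q.2.2⟩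
      left_inv := fun _ => rfl
      right_inv := fun _ => rfl }
  rw [Nat.card_congr byFirst, Nat.card_sigma, Nat.card_eq_fintype_card (α := Subtype _),
    ← Finset.card_univ, ← smul_eq_mul, ← Finset.sum_const]
  exact Finset.sum_congr rfl fun a' _ => card_linearIndependent_orth_congr a'.2 ha l

theorem card_orthPairs_comm : Nat.card (orthPairs m k l) = Nat.card (orthPairs m l k) :=
  Nat.card_congr <| (Equiv.prodComm _ _).subtypeEquiv fun _ =>
    ⟨fun ⟨ha, hh, hah⟩ => ⟨hh, ha, orth_comm.1 hah⟩,
     fun ⟨hh, ha, hha⟩ => ⟨ha, hh, orth_comm.1 hha⟩⟩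

theorem card_orthPairs_of_right {h : Fin l → Fin m → ZMod 2}
    (hh : LinearIndependent (ZMod 2) h) :
    Nat.card (orthPairs m k l) =
      Nat.card {h' : Fin l → Fin m → ZMod 2 // LinearIndependent (ZMod 2) h'} *
        Nat.card {a : Fin k → Fin m → ZMod 2 // LinearIndependent (ZMod 2) a ∧ orth a h} := by
  rw [card_orthPairs_comm, card_orthPairs_of_left hh]
  simp_rw [orth_comm (h := h)]

theorem densityAH_eq_densityHA_general (m k l : ℕ)
    (a : Fin k → (Fin m → ZMod 2)) (h : Fin l → (Fin m → ZMod 2)) :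
    densityAH m k l a h = densityHA m k l a h := by
  by_cases hah : LinearIndependent (ZMod 2) a ∧ LinearIndependent (ZMod 2) h ∧ orth a h
  · obtain ⟨ha, hh, hah⟩ := hah
    have hcount :=
      (card_orthPairs_of_left (l := l) ha).symm.trans (card_orthPairs_of_right (k := k) hh)
    rw [densityAH, densityHA, if_pos ha, if_pos ⟨hh, hah⟩, if_pos hh, if_pos ⟨ha, hah⟩,
      div_mul_div_comm, div_mul_div_comm, ← Nat.cast_mul, ← Nat.cast_mul, hcount]
  · simp only [densityAH, densityHA]
    split_ifs <;> simp_all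

/-- The two sampling orders (first a then h ∈ a^⊥, or first h then a ∈ h^⊥) yield
identical joint distributions. -/
theorem densityAH_eq_densityHA (m k l : ℕ) (hkl : k + l ≤ m)
    (a : Fin k → (Fin m → ZMod 2)) (h : Fin l → (Fin m → ZMod 2)) :
    densityAH m k l a h = densityHA m k l a h :=
  densityAH_eq_densityHA_general m k l a h
end
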